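/- Let μ be a compactly supported probability measure on ℝ with a_μ := inf(supp μ) and b_μ := sup(supp μ). If z ∈ ℂ∖supp μ satisfies G_μ′(z) = 0 (the complex derivative of the Stieltjes transform vanishes at z), then Re z ∈ (a_μ, b_μ) and |Im z| ≤ b_μ − a_μ. -/

import Mathlib

open MeasureTheory Filter Set

noncomputable section

/-- The topological support of a Borel measure on `ℝ`. -/
def msupp (μ : Measure ℝ) : Set ℝ := {x : ℝ | ∀ U ∈ nhds x, μ U ≠ 0}

/-- Compact support: some compact set has full measure. -/
def HasCompactSupp (μ : Measure ℝ) : Prop := ∃ K : Set ℝ, IsCompact K ∧ μ K = 1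

/-- `a_μ`, the infimum of the support. -/
def aInf (μ : Measure ℝ) : ℝ := sInf (msupp μ)

/-- `b_μ`, the supremum of the support. -/
def bSup (μ : Measure ℝ) : ℝ := sSup (msupp μ)

/-- The (real) Stieltjes transform `G_μ(z) = ∫ (λ - z)⁻¹ dμ(λ)`. -/
def Gst (μ : Measure ℝ) (z : ℝ) : ℝ := ∫ l, (l - z)⁻¹ ∂μ

/-- `G_μ(a_μ) = lim_{z ↑ a_μ} G_μ(z) ∈ (0,∞]`, as the supremum (in `EReal`) of the values of
`G_μ` on `(-∞, a_μ)` (the two agree since `G_μ` is increasing there). -/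
def GaSup (μ : Measure ℝ) : EReal :=
  sSup ((fun z => ((Gst μ z : ℝ) : EReal)) '' Set.Iio (aInf μ))

/-- `G_μ(b_μ) = lim_{z ↓ b_μ} G_μ(z) ∈ [-∞,0)`, as the infimum (in `EReal`) of the values of
`G_μ` on `(b_μ, ∞)` (the two agree since `G_μ` is increasing there). -/
def GbInf (μ : Measure ℝ) : EReal :=
  sInf ((fun z => ((Gst μ z : ℝ) : EReal)) '' Set.Ioi (bSup μ))

/-- The interval `D̂_μ = (-G_μ(a_μ), -G_μ(b_μ)) ⊆ ℝ`. -/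
def Dhat (μ : Measure ℝ) : Set ℝ :=
  {u : ℝ | -(GaSup μ) < (u : EReal) ∧ (u : EReal) < -(GbInf μ)}

/-- The inverse `G_μ^⟨-1⟩` of the restriction of `G_μ` to `ℝ ∖ [a_μ, b_μ]`. -/
def Ginv (μ : Measure ℝ) (g : ℝ) : ℝ :=
  Function.invFunOn (Gst μ) (Set.Iio (aInf μ) ∪ Set.Ioi (bSup μ)) g

/-- The real `R`-transform `R̂_μ(u) = G_μ^⟨-1⟩(-u) - u⁻¹`, meaningful for `u ∈ D̂_μ ∖ {0}`. -/
def Rhat (μ : Measure ℝ) (u : ℝ) : ℝ := Ginv μ (-u) - u⁻¹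

/-- `ρ` is a free additive convolution of `μ` and `ν`. -/
def IsFreeAdd (μ ν ρ : Measure ℝ) : Prop :=
  IsProbabilityMeasure ρ ∧ HasCompactSupp ρ ∧
  ∃ ε > (0 : ℝ), ∀ u : ℝ, u ∈ Set.Ioo (-ε) ε → u ≠ 0 →
    u ∈ Dhat ρ ∧ u ∈ Dhat μ ∧ u ∈ Dhat ν ∧ Rhat ρ u = Rhat μ u + Rhat ν u

/-- `μ` is nondegenerate: not a point mass. -/
def Nondeg (μ : Measure ℝ) : Prop := ¬ ∃ c : ℝ, μ = Measure.dirac c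

/-- The logarithmic potential `U_ρ(z) = ∫ log |z - λ| dρ(λ)`. -/
def Upot (ρ : Measure ℝ) (z : ℝ) : ℝ := ∫ l, Real.log |z - l| ∂ρ

/-- `E_{μ,ν,z}(g) = ∫₀^g s R̂_μ'(-s) ds + ∫ log (λ - z + R̂_μ(-g)) dν(λ)`. -/
def Efun (μ ν : Measure ℝ) (z : ℝ) (g : ℝ) : ℝ :=
  (∫ s in (0:ℝ)..g, s * deriv (Rhat μ) (-s)) + ∫ l, Real.log (l - z + Rhat μ (-g)) ∂ν

/-- The domain `Ê_{μ,ν,z}` of `E_{μ,ν,z}`. -/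
def Ehat (μ ν : Measure ℝ) (z : ℝ) : Set ℝ :=
  {g : ℝ | -g ∈ Dhat μ ∧ g ≠ 0 ∧ z - Rhat μ (-g) < aInf ν}

/-- `F̂_{μ,ν}(h) = R̂_μ(-G_ν(h)) + h`. -/
def Fhat (μ ν : Measure ℝ) (h : ℝ) : ℝ := Rhat μ (-(Gst ν h)) + h

/-- The domain of `F̂_{μ,ν}`. -/
def FhatDom (μ ν : Measure ℝ) : Set ℝ := {h : ℝ | h < aInf ν ∧ -(Gst ν h) ∈ Dhat μ}

/-- `Ĥ_{μ,ν}`: points of the domain to the left of which `F̂_{μ,ν}'` is positive. -/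
def Hhat (μ ν : Measure ℝ) : Set ℝ :=
  {h : ℝ | h ∈ FhatDom μ ν ∧ ∀ t ∈ FhatDom μ ν, t < h → 0 < deriv (Fhat μ ν) t}

/-- `h*_{μ,ν} = sup Ĥ_{μ,ν}`. -/
def hstar (μ ν : Measure ℝ) : ℝ := sSup (Hhat μ ν)

end


/-- The complex Stieltjes transform. -/
noncomputable def Gc (μ : MeasureTheory.Measure ℝ) (z : ℂ) : ℂ := ∫ l, ((l : ℂ) - z)⁻¹ ∂μ

/-!
For `d : ℂ`, `Re (conj d · G_μ'(z)) = ∫ Re (d (t - z)²) / |t - z|⁴ dμ(t)`, so `G_μ'(z) = 0` is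
impossible as soon as some `d` makes `Re (d (t - z)²)` positive on the support. With `z = x + iy`
this is `Re d · ((t - x)² - y²) + 2 Im d · (t - x) y`, and each excluded region has its own `d`:
`d = 1` if `y = 0` (then `t ≠ x` on the support), `d = y (-2y + i (b - x))` if `x ≤ a`, which gives
`2y² (y² + (t - x)(b - t))`, symmetrically if `b ≤ x`, and `d = -1` if `|y| > b - a`.
-/

open Metric ComplexConjugate

section Support

variable {μ : Measure ℝ}

lemma msupp_eq_support (μ : Measure ℝ) : msupp μ = μ.support := by
  ext x
  simp [msupp, Measure.mem_support_iff_forall, pos_iff_ne_zero]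

lemma isCompact_msupp [IsProbabilityMeasure μ] (hc : HasCompactSupp μ) :
    IsCompact (msupp μ) := by
  obtain ⟨K, hK, hK1⟩ := hc
  have hKae : K ∈ ae μ := by
    rwa [mem_ae_iff, prob_compl_eq_zero_iff hK.measurableSet]
  rw [msupp_eq_support]
  exact hK.of_isClosed_subset Measure.isClosed_support
    (Measure.support_subset_of_isClosed hK.isClosed hKae)

lemma exists_pos_le_norm_ofReal_sub {z : ℂ} (hz : z ∉ ((↑) : ℝ → ℂ) '' msupp μ) :
    ∃ δ > 0, ∀ t ∈ msupp μ, δ ≤ ‖(t : ℂ) - z‖ := by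
  have hT : IsClosed (((↑) : ℝ → ℂ) '' msupp μ) :=
    Complex.isometry_ofReal.isClosedEmbedding.isClosedMap _
      (msupp_eq_support μ ▸ Measure.isClosed_support)
  obtain ⟨δ, hδ, hball⟩ := Metric.isOpen_iff.1 hT.isOpen_compl z hz
  refine ⟨δ, hδ, fun t ht => not_lt.1 fun hlt => hball ?_ ⟨t, ht, rfl⟩⟩
  rwa [mem_ball, dist_eq_norm]

end Support

section Stieltjes

variable {μ : Measure ℝ} {z : ℂ}

lemma integrable_inv_ofReal_sub_pow [IsFiniteMeasure μ] (hz : z ∉ ((↑) : ℝ → ℂ) '' msupp μ)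
    (n : ℕ) : Integrable (fun t : ℝ => (((t : ℂ) - z) ^ n)⁻¹) μ := by
  obtain ⟨δ, hδ, hle⟩ := exists_pos_le_norm_ofReal_sub hz
  refine (integrable_const (δ ^ n)⁻¹).mono' (by fun_prop) ?_
  filter_upwards [msupp_eq_support μ ▸ Measure.support_mem_ae] with t ht
  rw [norm_inv, norm_pow]
  exact inv_anti₀ (by positivity) (pow_le_pow_left₀ hδ.le (hle t ht) n)

lemma hasDerivAt_Gc [IsFiniteMeasure μ] (hz : z ∉ ((↑) : ℝ → ℂ) '' msupp μ) :
    HasDerivAt (Gc μ) (∫ t, (((t : ℂ) - z) ^ 2)⁻¹ ∂μ) z := by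
  obtain ⟨δ, hδ, hle⟩ := exists_pos_le_norm_ofReal_sub hz
  have hnear : ∀ t ∈ msupp μ, ∀ w ∈ ball z (δ / 2), δ / 2 ≤ ‖(t : ℂ) - w‖ := by
    intro t ht w hw
    rw [mem_ball, dist_eq_norm] at hw
    have := norm_sub_le_norm_sub_add_norm_sub (t : ℂ) w z
    linarith [hle t ht]
  have hae : ∀ᵐ t ∂μ, t ∈ msupp μ := msupp_eq_support μ ▸ Measure.support_mem_ae
  refine (hasDerivAt_integral_of_dominated_loc_of_deriv_le
    (F := fun w (t : ℝ) => ((t : ℂ) - w)⁻¹) (F' := fun w (t : ℝ) => (((t : ℂ) - w) ^ 2)⁻¹)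
    (ball_mem_nhds z (half_pos hδ))
    (.of_forall fun w => (Complex.measurable_ofReal.sub_const w).inv.aestronglyMeasurable)
    (by simpa using integrable_inv_ofReal_sub_pow hz 1)
    ((Complex.measurable_ofReal.sub_const z).pow_const 2).inv.aestronglyMeasurable ?_
    (integrable_const ((δ / 2) ^ 2)⁻¹) ?_).2
  · filter_upwards [hae] with t ht w hw
    rw [norm_inv, norm_pow]
    exact inv_anti₀ (by positivity) (pow_le_pow_left₀ (half_pos hδ).le (hnear t ht w hw) 2)
  · filter_upwards [hae] with t ht w hw
    have hne : (t : ℂ) - w ≠ 0 := norm_pos_iff.1 ((half_pos hδ).trans_le (hnear t ht w hw))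
    exact (((hasDerivAt_id w).const_sub (t : ℂ)).inv hne).congr_deriv (by simp)

lemma re_mul_ofReal_sub_sq (d z : ℂ) (t : ℝ) :
    (d * ((t : ℂ) - z) ^ 2).re =
      d.re * ((t - z.re) ^ 2 - z.im ^ 2) + 2 * d.im * (t - z.re) * z.im := by
  simp only [sq, Complex.mul_re, Complex.mul_im, Complex.sub_re, Complex.sub_im,
    Complex.ofReal_re, Complex.ofReal_im]
  ring

lemma deriv_Gc_ne_zero_of_re_mul_pos [IsFiniteMeasure μ] [NeZero μ]
    (hz : z ∉ ((↑) : ℝ → ℂ) '' msupp μ) (d : ℂ)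
    (hd : ∀ t ∈ msupp μ, 0 < (d * ((t : ℂ) - z) ^ 2).re) : deriv (Gc μ) z ≠ 0 := by
  have hf := (integrable_inv_ofReal_sub_pow hz 2).const_mul (conj d)
  have hpos : ∀ᵐ t : ℝ ∂μ, 0 < (conj d * (((t : ℂ) - z) ^ 2)⁻¹).re := by
    filter_upwards [msupp_eq_support μ ▸ Measure.support_mem_ae] with t ht
    have hw : ((t : ℂ) - z) ^ 2 ≠ 0 := pow_ne_zero 2 (sub_ne_zero.2 fun h => hz ⟨t, ht, h⟩)
    simp only [Complex.inv_def, ← mul_assoc, ← map_mul, Complex.re_mul_ofReal, Complex.conj_re]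
    exact mul_pos (hd t ht) (inv_pos.2 (Complex.normSq_pos.2 hw))
  intro h0
  have hint : ∫ t, (conj d * (((t : ℂ) - z) ^ 2)⁻¹).re ∂μ = 0 := by
    calc ∫ t, (conj d * (((t : ℂ) - z) ^ 2)⁻¹).re ∂μ
        = (conj d * ∫ t, (((t : ℂ) - z) ^ 2)⁻¹ ∂μ).re := by
          rw [← integral_const_mul]; exact integral_re hf
      _ = 0 := by rw [← (hasDerivAt_Gc hz).deriv, h0, mul_zero, Complex.zero_re]
  obtain ⟨t, ht, ht0⟩ := (hpos.and ((integral_eq_zero_iff_of_nonneg_ae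
    (hpos.mono fun _ => le_of_lt) hf.re).1 hint)).exists
  exact ht.ne' ht0

variable [IsFiniteMeasure μ] [NeZero μ] {a b : ℝ}

lemma im_ne_zero_of_deriv_Gc_eq_zero (hz : z ∉ ((↑) : ℝ → ℂ) '' msupp μ)
    (hd : deriv (Gc μ) z = 0) : z.im ≠ 0 := by
  intro hy
  refine deriv_Gc_ne_zero_of_re_mul_pos hz 1 (fun t ht => ?_) hd
  have htx : t - z.re ≠ 0 := fun h =>
    hz ⟨t, ht, Complex.ext (by simpa [sub_eq_zero] using h) (by simp [hy])⟩
  rw [re_mul_ofReal_sub_sq]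
  simpa [hy] using sq_pos_of_ne_zero htx

lemma lt_re_of_deriv_Gc_eq_zero (hz : z ∉ ((↑) : ℝ → ℂ) '' msupp μ)
    (hd : deriv (Gc μ) z = 0) (ha : ∀ t ∈ msupp μ, a ≤ t) (hb : ∀ t ∈ msupp μ, t ≤ b) :
    a < z.re := by
  by_contra! hxa
  have hy := im_ne_zero_of_deriv_Gc_eq_zero hz hd
  refine deriv_Gc_ne_zero_of_re_mul_pos hz ⟨-2 * z.im ^ 2, (b - z.re) * z.im⟩ (fun t ht => ?_) hd
  have hpos : 0 < 2 * z.im ^ 2 * (z.im ^ 2 + (t - z.re) * (b - t)) :=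
    mul_pos (by positivity) (add_pos_of_pos_of_nonneg (by positivity)
      (mul_nonneg (by linarith [ha t ht, hb t ht]) (by linarith [ha t ht, hb t ht])))
  rw [re_mul_ofReal_sub_sq]
  linear_combination hpos

lemma re_lt_of_deriv_Gc_eq_zero (hz : z ∉ ((↑) : ℝ → ℂ) '' msupp μ)
    (hd : deriv (Gc μ) z = 0) (ha : ∀ t ∈ msupp μ, a ≤ t) (hb : ∀ t ∈ msupp μ, t ≤ b) :
    z.re < b := by
  by_contra! hbx
  have hy := im_ne_zero_of_deriv_Gc_eq_zero hz hd
  refine deriv_Gc_ne_zero_of_re_mul_pos hz ⟨-2 * z.im ^ 2, (a - z.re) * z.im⟩ (fun t ht => ?_) hd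
  have hpos : 0 < 2 * z.im ^ 2 * (z.im ^ 2 + (z.re - t) * (t - a)) :=
    mul_pos (by positivity) (add_pos_of_pos_of_nonneg (by positivity)
      (mul_nonneg (by linarith [ha t ht, hb t ht]) (by linarith [ha t ht, hb t ht])))
  rw [re_mul_ofReal_sub_sq]
  linear_combination hpos

lemma abs_im_le_of_deriv_Gc_eq_zero (hz : z ∉ ((↑) : ℝ → ℂ) '' msupp μ)
    (hd : deriv (Gc μ) z = 0) (ha : ∀ t ∈ msupp μ, a ≤ t) (hb : ∀ t ∈ msupp μ, t ≤ b) :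
    |z.im| ≤ b - a := by
  by_contra! hab
  have hax := lt_re_of_deriv_Gc_eq_zero hz hd ha hb
  have hxb := re_lt_of_deriv_Gc_eq_zero hz hd ha hb
  refine deriv_Gc_ne_zero_of_re_mul_pos hz (-1) (fun t ht => ?_) hd
  have htx : |t - z.re| < |z.im| := by
    rw [abs_sub_lt_iff]
    constructor <;> linarith [ha t ht, hb t ht]
  rw [re_mul_ofReal_sub_sq]
  simp only [Complex.neg_re, Complex.one_re, Complex.neg_im, Complex.one_im]
  nlinarith [sq_lt_sq.2 htx]

end Stieltjes

/-- critical points of the complex Stieltjes transform lie in the strip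
`Re z ∈ (a_μ, b_μ)`, `|Im z| ≤ b_μ - a_μ`. -/
theorem statement18 (μ : MeasureTheory.Measure ℝ) [MeasureTheory.IsProbabilityMeasure μ]
    (hc : HasCompactSupp μ) (z : ℂ)
    (hz : z ∉ (fun x : ℝ => (x : ℂ)) '' msupp μ) (hd : deriv (Gc μ) z = 0) :
    aInf μ < z.re ∧ z.re < bSup μ ∧ |z.im| ≤ bSup μ - aInf μ := by
  have hS := isCompact_msupp hc
  have ha (t : ℝ) (ht : t ∈ msupp μ) : aInf μ ≤ t := csInf_le hS.bddBelow ht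
  have hb (t : ℝ) (ht : t ∈ msupp μ) : t ≤ bSup μ := le_csSup hS.bddAbove ht
  exact ⟨lt_re_of_deriv_Gc_eq_zero hz hd ha hb, re_lt_of_deriv_Gc_eq_zero hz hd ha hb,
    abs_im_le_of_deriv_Gc_eq_zero hz hd ha hb⟩
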